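/- Let α < γ ≤ β be cones of Δ (α a proper face of γ and γ a face of β), and suppose γ is spanned by v_{j_1}, …, v_{j_k} with v_{j_1} not an edge generator of α. Then there exist u ∈ M, elements a_p ∈ S, and cones γ_p ∈ Δ, each containing α as a proper face, none contained in β, and each of dimension strictly greater than dim(γ), such that x_{j_1}·x(γ) = (1 − r_u)·x(γ) + Σ_p a_p·x(γ_p) in ℛ, where r_u = Π_{1≤i≤n} r_i^{a_i} for u = Σ_{1≤i≤n} a_i u_i. -/

import Mathlib

open scoped Classical

noncomputable section

namespace SU

/-- The closed real cone spanned by the vectors `v j`, `j ∈ F`. -/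
def realCone {n d : ℕ} (v : Fin d → Fin n → ℤ) (F : Finset (Fin d)) : Set (Fin n → ℝ) :=
  {x | ∃ c : Fin d → ℝ, (∀ j, 0 ≤ c j) ∧ (∀ j, j ∉ F → c j = 0) ∧
    x = ∑ j, c j • fun i => (v j i : ℝ)}

/-- A complete nonsingular fan in `N = ℤ^n`, recorded combinatorially.  Since the
cones of a nonsingular fan are simplicial, every cone is determined by the set of
its edges; `isCone F` says that the primitive vectors `v j`, `j ∈ F`, span a cone
of the fan `Δ`.  Faces correspond to subsets, and the dimension of a cone is the
cardinality of its edge set. -/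
structure Fan (n d : ℕ) where
  /-- the primitive generators of the `d` edges (1-dimensional cones) of the fan -/
  v : Fin d → Fin n → ℤ
  v_inj : Function.Injective v
  /-- `isCone F` : the `v j`, `j ∈ F`, span a cone of the fan -/
  isCone : Finset (Fin d) → Prop
  isCone_empty : isCone ∅
  isCone_singleton : ∀ j, isCone {j}
  /-- the fan is closed under taking faces -/
  isCone_mono : ∀ {F G}, isCone F → G ⊆ F → isCone G
  /-- any two cones meet along a common face -/
  isCone_inter : ∀ {F G}, isCone F → isCone G → isCone (F ∩ G)
  realCone_inter : ∀ {F G}, isCone F → isCone G →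
    realCone v F ∩ realCone v G = realCone v (F ∩ G)
  /-- the fan is complete : the union of its cones is all of `N ⊗ ℝ` -/
  complete : ∀ x : Fin n → ℝ, ∃ F, isCone F ∧ x ∈ realCone v F
  /-- nonsingularity : the generators of each cone form part of a `ℤ`-basis of `N` -/
  unimodular : ∀ {F}, isCone F → ∃ (b : Module.Basis (Fin n) ℤ (Fin n → ℤ))
    (ι : Fin d → Fin n), Set.InjOn ι ↑F ∧ ∀ j ∈ F, b (ι j) = v j

/-- An enumeration `σ 0, …, σ (m-1)` of the `n`-dimensional cones of the fan. -/
structure MaxOrder {n d : ℕ} (Δ : Fan n d) (m : ℕ) where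
  σ : Fin m → Finset (Fin d)
  isCone_σ : ∀ i, Δ.isCone (σ i)
  card_σ : ∀ i, (σ i).card = n
  σ_inj : Function.Injective σ
  σ_surj : ∀ F, Δ.isCone F → F.card = n → ∃ i, σ i = F

/-- `τ i` : the intersection of `σ i` with those cones `σ k`, `k > i`, with
`dim (σ i ∩ σ k) = n - 1`. -/
def MaxOrder.tau {n d m : ℕ} {Δ : Fan n d} (o : MaxOrder Δ m) (i : Fin m) :
    Finset (Fin d) :=
  (o.σ i).filter fun j => ∀ k, i < k → ((o.σ i) ∩ (o.σ k)).card = n - 1 → j ∈ o.σ k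

/-- Property (*) : `τ i` a face of `σ j` implies `i ≤ j`. -/
def MaxOrder.Star {n d m : ℕ} {Δ : Fan n d} (o : MaxOrder Δ m) : Prop :=
  ∀ i j, o.tau i ⊆ o.σ j → i ≤ j

/-- the set `{1, …, n} ⊆ {1, …, d}` of the first `n` edges -/
def firstn {n d : ℕ} (hnd : n ≤ d) : Finset (Fin d) :=
  Finset.univ.map ⟨Fin.castLE hnd, Fin.castLE_injective hnd⟩

variable {n d : ℕ} (S : Type*) [Ring S]

/-- The polynomial algebra over a (possibly noncommutative) ring `S` in `d`
central, pairwise commuting, variables. -/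
abbrev Poly (S : Type*) [Ring S] (d : ℕ) : Type _ := AddMonoidAlgebra S (Fin d →₀ ℕ)

/-- the variable `x j` -/
def X (j : Fin d) : Poly S d := AddMonoidAlgebra.single (Finsupp.single j 1) 1

/-- the scalar `s ∈ S` as a polynomial -/
def Cc (s : S) : Poly S d := AddMonoidAlgebra.single 0 s

/-- The square-free monomial `∏_{j ∈ F} x j`. -/
def mon (F : Finset (Fin d)) : Poly S d :=
  AddMonoidAlgebra.single (∑ j ∈ F, Finsupp.single j 1) 1

lemma commute_X (j k : Fin d) : Commute (X S j) (X S k) := by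
  show X S j * X S k = X S k * X S j
  simp only [X]
  rw [AddMonoidAlgebra.single_mul_single, AddMonoidAlgebra.single_mul_single, add_comm]

lemma commute_one_sub_X_pow (j k : Fin d) (a b : ℕ) :
    Commute ((1 - X S j) ^ a) ((1 - X S k) ^ b) :=
  ((Commute.one_left (1 - X S k)).sub_left
    ((Commute.one_right (X S j)).sub_right (commute_X S j k))).pow_pow a b

/-- the relation (on the polynomial ring) identifying every member of `gens`
with `0`; the corresponding `RingQuot` is the quotient by the two-sided ideal
generated by `gens`. -/
def relOf (gens : Set (Poly S d)) : Poly S d → Poly S d → Prop :=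
  fun p q => p ∈ gens ∧ q = 0

/-- type (i) generators : the monomials `x_{j₁} ⋯ x_{j_k}` (distinct indices)
such that `v_{j₁}, …, v_{j_k}` do not span a cone of `Δ`. -/
def gensCone (Δ : Fan n d) : Set (Poly S d) :=
  {p | ∃ F : Finset (Fin d), ¬ Δ.isCone F ∧ p = mon S F}

/-- type (ii) generators : the elements `y i = ∑_j ⟨u i, v j⟩ x j - r i`. -/
def gensLin (Δ : Fan n d) (uu : Fin n → ((Fin n → ℤ) →ₗ[ℤ] ℤ)) (r : Fin n → S) :
    Set (Poly S d) :=
  {p | ∃ i : Fin n, p = (∑ j, (uu i (Δ.v j)) • X S j) - Cc S (r i)}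

/-- the generators of the ideal `I_S` -/
def gensI (Δ : Fan n d) (uu : Fin n → ((Fin n → ℤ) →ₗ[ℤ] ℤ)) (r : Fin n → S) :
    Set (Poly S d) :=
  gensCone S Δ ∪ gensLin S Δ uu r

/-- the ring `R = S[x₁,…,x_d]/I_S` -/
abbrev RRing (Δ : Fan n d) (uu : Fin n → ((Fin n → ℤ) →ₗ[ℤ] ℤ)) (r : Fin n → S) :
    Type _ :=
  RingQuot (relOf S (gensI S Δ uu r))

/-- the quotient map `S[x₁,…,x_d] → R` -/
def mkR (Δ : Fan n d) (uu : Fin n → ((Fin n → ℤ) →ₗ[ℤ] ℤ)) (r : Fin n → S) :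
    Poly S d →+* RRing S Δ uu r :=
  RingQuot.mkRingHom _

/-- `∏_{j : ⟨u, v j⟩ > 0} (1 - x j) ^ ⟨u, v j⟩` -/
def zPos (Δ : Fan n d) (u : (Fin n → ℤ) →ₗ[ℤ] ℤ) : Poly S d :=
  Finset.univ.noncommProd (fun j => (1 - X S j) ^ (u (Δ.v j)).toNat)
    (fun j _ k _ _ => commute_one_sub_X_pow S j k _ _)

/-- `∏_{j : ⟨u, v j⟩ < 0} (1 - x j) ^ (-⟨u, v j⟩)` -/
def zNeg (Δ : Fan n d) (u : (Fin n → ℤ) →ₗ[ℤ] ℤ) : Poly S d :=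
  Finset.univ.noncommProd (fun j => (1 - X S j) ^ (-(u (Δ.v j))).toNat)
    (fun j _ k _ _ => commute_one_sub_X_pow S j k _ _)

lemma central_commute (ru : Fin n → Sˣ)
    (hcen : ∀ i, (ru i : S) ∈ Subring.center S) (i k : Fin n) :
    Commute (ru i) (ru k) := by
  show ru i * ru k = ru k * ru i
  exact Units.ext (by simpa using (Subring.mem_center_iff.mp (hcen i) (ru k)).symm)

/-- `r(u) = ∏_i r i ^ a i` for `u = ∑ a i • u i`, the `r i` being invertible. -/
def rOf (ru : Fin n → Sˣ) (hc : ∀ i k, Commute (ru i) (ru k)) (a : Fin n → ℤ) : S :=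
  (Finset.univ.noncommProd (fun i => ru i ^ a i)
    (fun i _ k _ _ => (hc i k).zpow_zpow _ _) : Sˣ)

/-- type (ii′) generators : the elements `z(u)` for `u ∈ M` -/
def gensZ (Δ : Fan n d) (uu : Fin n → ((Fin n → ℤ) →ₗ[ℤ] ℤ)) (ru : Fin n → Sˣ)
    (hc : ∀ i k, Commute (ru i) (ru k)) : Set (Poly S d) :=
  {p | ∃ a : Fin n → ℤ, p = zPos S Δ (∑ i, a i • uu i) -
    Cc S (rOf S ru hc a) * zNeg S Δ (∑ i, a i • uu i)}

/-- the generators of the ideal `𝓘_S` -/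
def gensII (Δ : Fan n d) (uu : Fin n → ((Fin n → ℤ) →ₗ[ℤ] ℤ)) (ru : Fin n → Sˣ)
    (hc : ∀ i k, Commute (ru i) (ru k)) : Set (Poly S d) :=
  gensCone S Δ ∪ gensZ S Δ uu ru hc

/-- the ring `ℛ = S[x₁,…,x_d]/𝓘_S` -/
abbrev RcalRing (Δ : Fan n d) (uu : Fin n → ((Fin n → ℤ) →ₗ[ℤ] ℤ)) (ru : Fin n → Sˣ)
    (hc : ∀ i k, Commute (ru i) (ru k)) : Type _ :=
  RingQuot (relOf S (gensII S Δ uu ru hc))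

/-- the quotient map `S[x₁,…,x_d] → ℛ` -/
def mkRcal (Δ : Fan n d) (uu : Fin n → ((Fin n → ℤ) →ₗ[ℤ] ℤ)) (ru : Fin n → Sˣ)
    (hc : ∀ i k, Commute (ru i) (ru k)) : Poly S d →+* RcalRing S Δ uu ru hc :=
  RingQuot.mkRingHom _

/-! ### Auxiliary machinery -/

section Aux

/-- The commutative polynomial ring `ℤ[x₁,…,x_d]`. -/
abbrev CP (d : ℕ) : Type := AddMonoidAlgebra ℤ (Fin d →₀ ℕ)

/-- monomial with exponent vector `e` -/
def mm {d : ℕ} (e : Fin d →₀ ℕ) : CP d := AddMonoidAlgebra.single e 1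

lemma mm_mul {d : ℕ} (e f : Fin d →₀ ℕ) : mm e * mm f = mm (e + f) := by
  simp [mm, AddMonoidAlgebra.single_mul_single]

lemma mm_zero {d : ℕ} : mm (0 : Fin d →₀ ℕ) = 1 := rfl

/-- the square-free monomial attached to a finset, in `CP d` -/
def xCP {d : ℕ} (F : Finset (Fin d)) : CP d := ∏ j ∈ F, mm (Finsupp.single j 1)

lemma xCP_eq {d : ℕ} (F : Finset (Fin d)) :
    xCP F = mm (∑ j ∈ F, Finsupp.single j (1 : ℕ)) := by
  classical
  induction F using Finset.induction_on with
  | empty => simp [xCP, mm_zero]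
  | @insert a s ha ih =>
      rw [xCP, Finset.prod_insert ha, ← xCP, ih, mm_mul, Finset.sum_insert ha]

lemma xCP_insert {d : ℕ} {F : Finset (Fin d)} {j : Fin d} (hj : j ∉ F) :
    xCP (insert j F) = mm (Finsupp.single j 1) * xCP F := by
  rw [xCP, Finset.prod_insert hj, ← xCP]

variable {n d : ℕ} (S : Type*) [Ring S]

lemma Cc_mul' (a b : S) : (Cc S (a * b) : Poly S d) = Cc S a * Cc S b := by
  simp [Cc, AddMonoidAlgebra.single_mul_single]

lemma Cc_one' : (Cc S 1 : Poly S d) = 1 := rfl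

lemma Cc_sub' (a b : S) : (Cc S (a - b) : Poly S d) = Cc S a - Cc S b :=
  AddMonoidAlgebra.single_sub _ _ _

lemma Cc_neg' (a : S) : (Cc S (-a) : Poly S d) = -Cc S a :=
  AddMonoidAlgebra.single_neg _ _

/-- the canonical ring homomorphism `ℤ[x] → S[x]` -/
def psi (d : ℕ) : CP d →+* Poly S d :=
  AddMonoidAlgebra.liftNCRingHom (Int.castRingHom _)
    (AddMonoidAlgebra.of S (Fin d →₀ ℕ)) (fun x _ => Int.cast_commute x _)

lemma psi_mm (e : Fin d →₀ ℕ) : psi S d (mm e) = AddMonoidAlgebra.single e (1 : S) := by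
  simp [psi, mm, AddMonoidAlgebra.liftNCRingHom]

lemma psi_X (j : Fin d) : psi S d (mm (Finsupp.single j 1)) = X S j := psi_mm S _

lemma psi_xCP (F : Finset (Fin d)) : psi S d (xCP F) = mon S F := by
  rw [xCP_eq, psi_mm]; rfl

end Aux

section Aux2

variable {n d : ℕ} (S : Type*) [Ring S] (Δ : Fan n d)
  (uu : Fin n → ((Fin n → ℤ) →ₗ[ℤ] ℤ)) (ru : Fin n → Sˣ)
  (hc : ∀ i k, Commute (ru i) (ru k))

/-- the composite `ℤ[x] → S[x] → ℛ` -/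
def Phi : CP d →+* RcalRing S Δ uu ru hc := (mkRcal S Δ uu ru hc).comp (psi S d)

lemma mk_mon_zero {F : Finset (Fin d)} (hF : ¬ Δ.isCone F) :
    mkRcal S Δ uu ru hc (mon S F) = 0 := by
  have h : relOf S (gensII S Δ uu ru hc) (mon S F) 0 := ⟨Or.inl ⟨F, hF, rfl⟩, rfl⟩
  have h2 := RingQuot.mkRingHom_rel h
  rw [show RingQuot.mkRingHom (relOf S (gensII S Δ uu ru hc)) = mkRcal S Δ uu ru hc
    from rfl, map_zero] at h2
  exact h2

lemma Phi_xCP (F : Finset (Fin d)) :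
    Phi S Δ uu ru hc (xCP F) = mkRcal S Δ uu ru hc (mon S F) := by
  rw [Phi, RingHom.comp_apply, psi_xCP]

lemma Phi_xCP_zero (p : CP d) {F : Finset (Fin d)} (hF : ¬ Δ.isCone F) :
    Phi S Δ uu ru hc (p * xCP F) = 0 := by
  rw [map_mul, Phi_xCP, mk_mon_zero S Δ uu ru hc hF, mul_zero]

lemma psi_zPos (U : (Fin n → ℤ) →ₗ[ℤ] ℤ) :
    psi S d (∏ l, (1 - mm (Finsupp.single l 1)) ^ (U (Δ.v l)).toNat) = zPos S Δ U := by
  have h := Finset.map_noncommProd Finset.univ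
    (fun l => ((1 : CP d) - mm (Finsupp.single l 1)) ^ (U (Δ.v l)).toNat)
    (fun _ _ _ _ _ => Commute.all _ _) (psi S d)
  rw [Finset.noncommProd_eq_prod] at h
  rw [h]
  exact Finset.noncommProd_congr rfl
    (fun x _ => by rw [map_pow, map_sub, map_one, psi_X]) _

lemma psi_zNeg (U : (Fin n → ℤ) →ₗ[ℤ] ℤ) :
    psi S d (∏ l, (1 - mm (Finsupp.single l 1)) ^ (-(U (Δ.v l))).toNat) = zNeg S Δ U := by
  have h := Finset.map_noncommProd Finset.univ
    (fun l => ((1 : CP d) - mm (Finsupp.single l 1)) ^ (-(U (Δ.v l))).toNat)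
    (fun _ _ _ _ _ => Commute.all _ _) (psi S d)
  rw [Finset.noncommProd_eq_prod] at h
  rw [h]
  exact Finset.noncommProd_congr rfl
    (fun x _ => by rw [map_pow, map_sub, map_one, psi_X]) _

lemma z_rel (a : Fin n → ℤ) :
    mkRcal S Δ uu ru hc (zPos S Δ (∑ i, a i • uu i)) =
      mkRcal S Δ uu ru hc (Cc S (rOf S ru hc a)) *
        mkRcal S Δ uu ru hc (zNeg S Δ (∑ i, a i • uu i)) := by
  have h : relOf S (gensII S Δ uu ru hc)
      (zPos S Δ (∑ i, a i • uu i) -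
        Cc S (rOf S ru hc a) * zNeg S Δ (∑ i, a i • uu i)) 0 := ⟨Or.inr ⟨a, rfl⟩, rfl⟩
  have h2 := RingQuot.mkRingHom_rel h
  rw [show RingQuot.mkRingHom (relOf S (gensII S Δ uu ru hc)) = mkRcal S Δ uu ru hc
    from rfl, map_zero, map_sub, map_mul, sub_eq_zero] at h2
  exact h2

/-- the left `S`-span of the monomials `x(G)` for `G` satisfying `Pred` -/
def SpanP (Pred : Finset (Fin d) → Prop) : AddSubmonoid (RcalRing S Δ uu ru hc) :=
  AddSubmonoid.closure {y | ∃ (c : S) (G : Finset (Fin d)), Pred G ∧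
    y = mkRcal S Δ uu ru hc (Cc S c) * mkRcal S Δ uu ru hc (mon S G)}

lemma SpanP_gen {Pred : Finset (Fin d) → Prop} {G : Finset (Fin d)} (hG : Pred G) (c : S) :
    mkRcal S Δ uu ru hc (Cc S c) * mkRcal S Δ uu ru hc (mon S G) ∈
      SpanP S Δ uu ru hc Pred :=
  AddSubmonoid.subset_closure ⟨c, G, hG, rfl⟩

lemma SpanP_mono {P1 P2 : Finset (Fin d) → Prop} (h : ∀ G, P1 G → P2 G) :
    SpanP S Δ uu ru hc P1 ≤ SpanP S Δ uu ru hc P2 :=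
  AddSubmonoid.closure_mono (fun y hy => by
    obtain ⟨c, G, hG, rfl⟩ := hy; exact ⟨c, G, h G hG, rfl⟩)

lemma SpanP_neg {Pred : Finset (Fin d) → Prop} {y : RcalRing S Δ uu ru hc}
    (hy : y ∈ SpanP S Δ uu ru hc Pred) : -y ∈ SpanP S Δ uu ru hc Pred := by
  induction hy using AddSubmonoid.closure_induction with
  | mem x hx =>
      obtain ⟨c, G, hG, rfl⟩ := hx
      have h3 : -(mkRcal S Δ uu ru hc (Cc S c) * mkRcal S Δ uu ru hc (mon S G)) =
          mkRcal S Δ uu ru hc (Cc S (-c)) * mkRcal S Δ uu ru hc (mon S G) := by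
        rw [Cc_neg', map_neg]
        exact (neg_mul (mkRcal S Δ uu ru hc (Cc S c)) (mkRcal S Δ uu ru hc (mon S G))).symm
      rw [h3]
      exact SpanP_gen S Δ uu ru hc hG (-c)
  | zero => simpa using AddSubmonoid.zero_mem _
  | add x y hx hy ihx ihy => rw [neg_add]; exact add_mem ihx ihy

lemma SpanP_sub {Pred : Finset (Fin d) → Prop} {y z : RcalRing S Δ uu ru hc}
    (hy : y ∈ SpanP S Δ uu ru hc Pred) (hz : z ∈ SpanP S Δ uu ru hc Pred) :
    y - z ∈ SpanP S Δ uu ru hc Pred := by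
  rw [sub_eq_add_neg]; exact add_mem hy (SpanP_neg S Δ uu ru hc hz)

lemma SpanP_cmul {Pred : Finset (Fin d) → Prop} (s : S) {y : RcalRing S Δ uu ru hc}
    (hy : y ∈ SpanP S Δ uu ru hc Pred) :
    mkRcal S Δ uu ru hc (Cc S s) * y ∈ SpanP S Δ uu ru hc Pred := by
  induction hy using AddSubmonoid.closure_induction with
  | mem x hx =>
      obtain ⟨c, G, hG, rfl⟩ := hx
      rw [← mul_assoc, ← map_mul, ← Cc_mul']
      exact SpanP_gen S Δ uu ru hc hG _
  | zero => rw [mul_zero]; exact AddSubmonoid.zero_mem _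
  | add x y hx hy ihx ihy => rw [mul_add]; exact add_mem ihx ihy

lemma SpanP_extract {Pred : Finset (Fin d) → Prop} {y : RcalRing S Δ uu ru hc}
    (hy : y ∈ SpanP S Δ uu ru hc Pred) :
    ∃ (s : ℕ) (G : Fin s → Finset (Fin d)) (c : Fin s → S),
      (∀ p, Pred (G p)) ∧
      y = ∑ p, mkRcal S Δ uu ru hc (Cc S (c p)) * mkRcal S Δ uu ru hc (mon S (G p)) := by
  induction hy using AddSubmonoid.closure_induction with
  | mem x hx =>
      obtain ⟨c, G, hG, rfl⟩ := hx
      exact ⟨1, fun _ => G, fun _ => c, fun _ => hG, by simp⟩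
  | zero => exact ⟨0, Fin.elim0, Fin.elim0, fun p => p.elim0, by simp⟩
  | add x y hx hy ihx ihy =>
      obtain ⟨s1, G1, c1, h1, rfl⟩ := ihx
      obtain ⟨s2, G2, c2, h2, rfl⟩ := ihy
      refine ⟨s1 + s2, Fin.addCases G1 G2, Fin.addCases c1 c2, ?_, ?_⟩
      · intro p
        refine Fin.addCases (fun i => ?_) (fun i => ?_) p
        · simpa using h1 i
        · simpa using h2 i
      · rw [Fin.sum_univ_add]
        congr 1 <;> exact Finset.sum_congr rfl (fun i _ => by simp)

lemma cone_card_le {F : Finset (Fin d)} (hF : Δ.isCone F) : F.card ≤ n := by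
  obtain ⟨b, ι, hinj, -⟩ := Δ.unimodular hF
  calc F.card = (F.image ι).card := (Finset.card_image_of_injOn hinj).symm
    _ ≤ (Finset.univ : Finset (Fin n)).card := Finset.card_le_univ _
    _ = n := by simp

end Aux2

section Aux3

/-- total degree of an exponent vector -/
def degk {d : ℕ} (κ : Fin d →₀ ℕ) : ℕ := κ.sum fun _ x => x

lemma degk_add_single {d : ℕ} (κ : Fin d →₀ ℕ) (j : Fin d) :
    degk (κ + Finsupp.single j 1) = degk κ + 1 := by
  unfold degk
  rw [Finsupp.sum_add_index' (fun _ => rfl) (fun _ _ _ => rfl),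
    Finsupp.sum_single_index rfl]

lemma degk_eq_zero {d : ℕ} {κ : Fin d →₀ ℕ} (h : degk κ = 0) : κ = 0 := by
  classical
  rw [degk, Finsupp.sum] at h
  have h2 := Finset.sum_eq_zero_iff.mp h
  ext j
  by_cases hj : j ∈ κ.support
  · simpa using h2 j hj
  · simpa using Finsupp.notMem_support_iff.mp hj

lemma sub_single_add {d : ℕ} {κ : Fin d →₀ ℕ} {j : Fin d} (hj : j ∈ κ.support) :
    κ - Finsupp.single j 1 + Finsupp.single j 1 = κ :=
  tsub_add_cancel_of_le (Finsupp.single_le_iff.mpr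
    (Nat.one_le_iff_ne_zero.mpr (Finsupp.mem_support_iff.mp hj)))

variable {n d : ℕ} (S : Type*) [Ring S] (Δ : Fan n d)
  (uu : Fin n → ((Fin n → ℤ) →ₗ[ℤ] ℤ)) (ru : Fin n → Sˣ)
  (hc : ∀ i k, Commute (ru i) (ru k))

lemma exists_dual (hnd : n ≤ d) (hfirst : Δ.isCone (firstn hnd))
    (huu : ∀ i j : Fin n, uu i (Δ.v (Fin.castLE hnd j)) = if i = j then 1 else 0)
    {β : Finset (Fin d)} (hβ : Δ.isCone β) {j : Fin d} (hj : j ∈ β) :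
    ∃ a : Fin n → ℤ, ((∑ i, a i • uu i) (Δ.v j) = 1) ∧
      ∀ l ∈ β, l ≠ j → (∑ i, a i • uu i) (Δ.v l) = 0 := by
  classical
  obtain ⟨b, ι, hinj, hb⟩ := Δ.unimodular hβ
  set u : (Fin n → ℤ) →ₗ[ℤ] ℤ := b.coord (ι j) with hu
  obtain ⟨b', ι', hinj', hb'⟩ := Δ.unimodular hfirst
  have hmem : ∀ i : Fin n, Fin.castLE hnd i ∈ firstn hnd := fun i =>
    Finset.mem_map.mpr ⟨i, Finset.mem_univ i, rfl⟩
  have hιinj : Function.Injective (fun i : Fin n => ι' (Fin.castLE hnd i)) := by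
    intro i1 i2 h12
    exact Fin.castLE_injective hnd (hinj' (hmem i1) (hmem i2) h12)
  have hbij := Finite.injective_iff_bijective.mp hιinj
  set eqv := Equiv.ofBijective _ hbij with heqv
  set B := b'.reindex eqv.symm with hB
  have hBi : ∀ i, B i = Δ.v (Fin.castLE hnd i) := by
    intro i
    rw [hB, Module.Basis.reindex_apply, Equiv.symm_symm]
    exact hb' _ (hmem i)
  refine ⟨fun i => u (Δ.v (Fin.castLE hnd i)), ?_, ?_⟩
  all_goals
    have key : (∑ i, u (Δ.v (Fin.castLE hnd i)) • uu i) = u := by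
      apply B.ext
      intro i
      rw [hBi, LinearMap.sum_apply]
      simp only [LinearMap.smul_apply, huu, smul_eq_mul, mul_ite, mul_one, mul_zero]
      rw [Finset.sum_ite_eq' Finset.univ i (fun i => u (Δ.v (Fin.castLE hnd i)))]
      simp
  · rw [key, show Δ.v j = b (ι j) from (hb j hj).symm, hu]
    simp [Module.Basis.coord_apply, Module.Basis.repr_self]
  · intro l hl hlj
    rw [key, show Δ.v l = b (ι l) from (hb l hl).symm, hu, Module.Basis.coord_apply,
      Module.Basis.repr_self]
    exact Finsupp.single_eq_of_ne (fun h => hlj (hinj hl hj h.symm))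

lemma rearr {R : Type*} [Ring R] (W A B C r : R) :
    W + A - B - r * (W + C) = (1 - r) * W + (A - B - r * C) := by
  noncomm_ring

lemma oneStep (hnd : n ≤ d) (hfirst : Δ.isCone (firstn hnd))
    (huu : ∀ i j : Fin n, uu i (Δ.v (Fin.castLE hnd j)) = if i = j then 1 else 0)
    {γ β : Finset (Fin d)} (hβ : Δ.isCone β) (hγβ : γ ⊆ β)
    {j : Fin d} (hj : j ∈ γ) (κ : Fin d →₀ ℕ) :
    ∃ (a : Fin n → ℤ) (L : Finset (Fin d)) (ep en : Fin d → ℕ),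
      Disjoint L β ∧
      Phi S Δ uu ru hc (mm (κ + Finsupp.single j 1) * xCP γ) =
        mkRcal S Δ uu ru hc (Cc S (1 - rOf S ru hc a)) *
          Phi S Δ uu ru hc (mm κ * xCP γ)
        + (Phi S Δ uu ru hc
            ((∏ l ∈ L, (1 - mm (Finsupp.single l 1)) ^ ep l - 1) * (mm κ * xCP γ))
          - Phi S Δ uu ru hc
            ((∏ l ∈ L, (1 - mm (Finsupp.single l 1)) ^ ep l - 1) *
              (mm (κ + Finsupp.single j 1) * xCP γ))
          - mkRcal S Δ uu ru hc (Cc S (rOf S ru hc a)) *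
            Phi S Δ uu ru hc
              ((∏ l ∈ L, (1 - mm (Finsupp.single l 1)) ^ en l - 1) * (mm κ * xCP γ))) := by
  classical
  obtain ⟨a, h1, h0⟩ := exists_dual Δ uu hnd hfirst huu hβ (hγβ hj)
  set U : (Fin n → ℤ) →ₗ[ℤ] ℤ := ∑ i, a i • uu i with hU
  set L : Finset (Fin d) :=
    Finset.univ.filter (fun l => l ≠ j ∧ U (Δ.v l) ≠ 0) with hL
  set ep : Fin d → ℕ := fun l => (U (Δ.v l)).toNat with hep
  set en : Fin d → ℕ := fun l => (-(U (Δ.v l))).toNat with hen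
  clear_value U
  have hLβ : Disjoint L β := by
    rw [Finset.disjoint_left]
    intro l hlL hlβ
    rw [hL, Finset.mem_filter] at hlL
    exact hlL.2.2 (h0 l hlβ hlL.2.1)
  have hLj : ∀ l ∈ L, l ≠ j := by
    intro l hlL; rw [hL, Finset.mem_filter] at hlL; exact hlL.2.1
  -- factorizations
  have hPosSplit : (∏ l, (1 - mm (Finsupp.single l 1)) ^ ep l : CP d) =
      (1 - mm (Finsupp.single j 1)) * ∏ l ∈ L, (1 - mm (Finsupp.single l 1)) ^ ep l := by
    rw [← Finset.mul_prod_erase Finset.univ _ (Finset.mem_univ j)]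
    have hepj : ep j = 1 := by rw [hep]; simp [h1]
    rw [hepj, pow_one]
    congr 1
    refine (Finset.prod_subset ?_ ?_).symm
    · intro l hlL
      exact Finset.mem_erase.mpr ⟨hLj l hlL, Finset.mem_univ l⟩
    · intro x hxe hxL
      have hxj : x ≠ j := (Finset.mem_erase.mp hxe).1
      have hx0 : U (Δ.v x) = 0 := by
        by_contra hx0
        exact hxL (by rw [hL, Finset.mem_filter]; exact ⟨Finset.mem_univ x, hxj, hx0⟩)
      rw [hep]; simp [hx0]
  have hNegSplit : (∏ l, (1 - mm (Finsupp.single l 1)) ^ en l : CP d) =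
      ∏ l ∈ L, (1 - mm (Finsupp.single l 1)) ^ en l := by
    refine (Finset.prod_subset (Finset.subset_univ L) ?_).symm
    intro x _ hxL
    by_cases hxj : x = j
    · subst hxj; rw [hen]; simp [h1]
    · have hx0 : U (Δ.v x) = 0 := by
        by_contra hx0
        exact hxL (by rw [hL, Finset.mem_filter]; exact ⟨Finset.mem_univ x, hxj, hx0⟩)
      rw [hen]; simp [hx0]
  refine ⟨a, L, ep, en, hLβ, ?_⟩
  set w : CP d := mm κ * xCP γ with hw
  set QP : CP d := ∏ l ∈ L, (1 - mm (Finsupp.single l 1)) ^ ep l with hQP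
  set QN : CP d := ∏ l ∈ L, (1 - mm (Finsupp.single l 1)) ^ en l with hQN
  clear_value w QP QN
  have hx : mm (Finsupp.single j 1) * w = mm (κ + Finsupp.single j 1) * xCP γ := by
    rw [hw, ← mul_assoc, mm_mul, add_comm]
  have hPP : (∏ l, (1 - mm (Finsupp.single l 1)) ^ ep l) * w =
      w + (QP - 1) * w - mm (κ + Finsupp.single j 1) * xCP γ
        - (QP - 1) * (mm (κ + Finsupp.single j 1) * xCP γ) := by
    rw [hPosSplit, ← hx]; ring
  have hNN : (∏ l, (1 - mm (Finsupp.single l 1)) ^ en l) * w = w + (QN - 1) * w := by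
    rw [hNegSplit]; ring
  have e1 : Phi S Δ uu ru hc (∏ l, (1 - mm (Finsupp.single l 1)) ^ ep l) =
      mkRcal S Δ uu ru hc (zPos S Δ U) := by
    rw [show Phi S Δ uu ru hc (∏ l, (1 - mm (Finsupp.single l 1)) ^ ep l) =
      mkRcal S Δ uu ru hc (psi S d (∏ l, (1 - mm (Finsupp.single l 1)) ^ ep l)) from rfl]
    rw [hep]
    exact congrArg _ (psi_zPos S Δ U)
  have e2 : Phi S Δ uu ru hc (∏ l, (1 - mm (Finsupp.single l 1)) ^ en l) =
      mkRcal S Δ uu ru hc (zNeg S Δ U) := by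
    rw [show Phi S Δ uu ru hc (∏ l, (1 - mm (Finsupp.single l 1)) ^ en l) =
      mkRcal S Δ uu ru hc (psi S d (∏ l, (1 - mm (Finsupp.single l 1)) ^ en l)) from rfl]
    rw [hen]
    exact congrArg _ (psi_zNeg S Δ U)
  have h2 : Phi S Δ uu ru hc ((∏ l, (1 - mm (Finsupp.single l 1)) ^ ep l) * w) =
      mkRcal S Δ uu ru hc (Cc S (rOf S ru hc a)) *
        Phi S Δ uu ru hc ((∏ l, (1 - mm (Finsupp.single l 1)) ^ en l) * w) := by
    calc Phi S Δ uu ru hc ((∏ l, (1 - mm (Finsupp.single l 1)) ^ ep l) * w)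
        = mkRcal S Δ uu ru hc (zPos S Δ U) * Phi S Δ uu ru hc w := by
          rw [map_mul, e1]
      _ = (mkRcal S Δ uu ru hc (Cc S (rOf S ru hc a)) *
            mkRcal S Δ uu ru hc (zNeg S Δ U)) * Phi S Δ uu ru hc w := by
          rw [hU, z_rel S Δ uu ru hc a]
      _ = mkRcal S Δ uu ru hc (Cc S (rOf S ru hc a)) *
            Phi S Δ uu ru hc ((∏ l, (1 - mm (Finsupp.single l 1)) ^ en l) * w) := by
          rw [map_mul, e2, mul_assoc]
  rw [hPP, hNN] at h2
  simp only [map_add, map_sub] at h2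
  have h4 : Phi S Δ uu ru hc (mm (κ + Finsupp.single j 1) * xCP γ) =
      Phi S Δ uu ru hc w + Phi S Δ uu ru hc ((QP - 1) * w)
      - Phi S Δ uu ru hc ((QP - 1) * (mm (κ + Finsupp.single j 1) * xCP γ))
      - mkRcal S Δ uu ru hc (Cc S (rOf S ru hc a)) *
          (Phi S Δ uu ru hc w + Phi S Δ uu ru hc ((QN - 1) * w)) := by
    rw [← h2]; abel
  rw [h4, Cc_sub', Cc_one', map_sub, map_one]
  exact rearr _ _ _ _ _

lemma core (hnd : n ≤ d) (hfirst : Δ.isCone (firstn hnd))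
    (huu : ∀ i j : Fin n, uu i (Δ.v (Fin.castLE hnd j)) = if i = j then 1 else 0) :
    ∀ k : ℕ,
      (∀ γ : Finset (Fin d), Δ.isCone γ → n - γ.card ≤ k → ∀ (D : ℕ) (κ : Fin d →₀ ℕ),
        degk κ ≤ D →
        Phi S Δ uu ru hc (mm κ * xCP γ) ∈
          SpanP S Δ uu ru hc (fun G => Δ.isCone G ∧ γ ⊆ G)) ∧
      (∀ γ : Finset (Fin d), Δ.isCone γ → n - γ.card ≤ k →
        ∀ (N : ℕ) (L : Finset (Fin d)) (e : Fin d → ℕ) (κ : Fin d →₀ ℕ),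
        L.sum e + L.card ≤ N → Disjoint L γ →
        Phi S Δ uu ru hc
            ((∏ l ∈ L, (1 - mm (Finsupp.single l 1)) ^ e l - 1) * (mm κ * xCP γ)) ∈
          SpanP S Δ uu ru hc
            (fun G => Δ.isCone G ∧ γ ⊆ G ∧ ∃ l ∈ L, e l ≠ 0 ∧ l ∈ G)) := by
  intro k
  induction k using Nat.strong_induction_on with
  | _ k H =>
  have hC : ∀ γ : Finset (Fin d), Δ.isCone γ → n - γ.card ≤ k →
      ∀ (N : ℕ) (L : Finset (Fin d)) (e : Fin d → ℕ) (κ : Fin d →₀ ℕ),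
      L.sum e + L.card ≤ N → Disjoint L γ →
      Phi S Δ uu ru hc
          ((∏ l ∈ L, (1 - mm (Finsupp.single l 1)) ^ e l - 1) * (mm κ * xCP γ)) ∈
        SpanP S Δ uu ru hc
          (fun G => Δ.isCone G ∧ γ ⊆ G ∧ ∃ l ∈ L, e l ≠ 0 ∧ l ∈ G) := by
    intro γ hγ hk N
    induction N with
    | zero =>
        intro L e κ hN hdisj
        have hL0 : L = ∅ := Finset.card_eq_zero.mp (by omega)
        subst hL0
        simp only [Finset.prod_empty, sub_self, zero_mul, map_zero]
        exact AddSubmonoid.zero_mem _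
    | succ N ihN =>
        intro L e κ hN hdisj
        rcases Finset.eq_empty_or_nonempty L with rfl | ⟨l, hl⟩
        · simp only [Finset.prod_empty, sub_self, zero_mul, map_zero]
          exact AddSubmonoid.zero_mem _
        · have hlγ : l ∉ γ := fun h => Finset.disjoint_left.mp hdisj hl h
          cases he : e l with
          | zero =>
              have hprod : (∏ l' ∈ L, (1 - mm (Finsupp.single l' 1)) ^ e l' : CP d)
                  = ∏ l' ∈ L.erase l, (1 - mm (Finsupp.single l' 1)) ^ e l' :=
                (Finset.prod_erase _ (by rw [he, pow_zero])).symm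
              rw [hprod]
              have hmeas : (L.erase l).sum e + (L.erase l).card ≤ N := by
                have h1 : (L.erase l).sum e = L.sum e := Finset.sum_erase _ (by rw [he])
                have h2 : (L.erase l).card = L.card - 1 := Finset.card_erase_of_mem hl
                have h3 : 1 ≤ L.card := Finset.card_pos.mpr ⟨l, hl⟩
                omega
              refine SpanP_mono S Δ uu ru hc ?_
                (ihN (L.erase l) e κ hmeas (hdisj.mono_left (Finset.erase_subset _ _)))
              rintro G ⟨hG1, hG2, l', hl', he', hG3⟩
              exact ⟨hG1, hG2, l', Finset.mem_of_mem_erase hl', he', hG3⟩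
          | succ e'' =>
              set e' : Fin d → ℕ := Function.update e l e'' with hupd
              have hsplit : (∏ l' ∈ L, (1 - mm (Finsupp.single l' 1)) ^ e l' : CP d) =
                  (1 - mm (Finsupp.single l 1)) *
                    ∏ l' ∈ L, (1 - mm (Finsupp.single l' 1)) ^ e' l' := by
                have h1 := Finset.mul_prod_erase L
                  (fun l' => ((1 : CP d) - mm (Finsupp.single l' 1)) ^ e l') hl
                have h2 := Finset.mul_prod_erase L
                  (fun l' => ((1 : CP d) - mm (Finsupp.single l' 1)) ^ e' l') hl
                have hrest : (∏ l' ∈ L.erase l, (1 - mm (Finsupp.single l' 1)) ^ e' l' : CP d) =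
                    ∏ l' ∈ L.erase l, (1 - mm (Finsupp.single l' 1)) ^ e l' :=
                  Finset.prod_congr rfl (fun x hx => by
                    rw [hupd, Function.update_of_ne (Finset.ne_of_mem_erase hx)])
                have hel : e' l = e'' := by rw [hupd]; exact Function.update_self _ _ _
                rw [← h1, ← h2]
                simp only [hrest, hel, he, pow_succ]
                ring
              have hx : (mm (Finsupp.single l 1) * (mm κ * xCP γ) : CP d) =
                  mm (κ + Finsupp.single l 1) * xCP γ := by
                rw [← mul_assoc, mm_mul, add_comm]
              have hid : ((∏ l' ∈ L, (1 - mm (Finsupp.single l' 1)) ^ e l' - 1) *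
                    (mm κ * xCP γ) : CP d) =
                  (∏ l' ∈ L, (1 - mm (Finsupp.single l' 1)) ^ e' l' - 1) * (mm κ * xCP γ)
                  - (∏ l' ∈ L, (1 - mm (Finsupp.single l' 1)) ^ e' l' - 1) *
                      (mm (κ + Finsupp.single l 1) * xCP γ)
                  - mm (κ + Finsupp.single l 1) * xCP γ := by
                rw [hsplit, ← hx]; ring
              rw [hid]
              simp only [map_sub]
              have hmeas' : L.sum e' + L.card ≤ N := by
                have h1 : L.sum e' = e'' + ∑ x ∈ L \ {l}, e x := by
                  rw [hupd]; exact Finset.sum_update_of_mem hl _ _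
                have h2 : e l + ∑ x ∈ L \ {l}, e x = L.sum e := by
                  rw [← Finset.erase_eq]; exact Finset.add_sum_erase _ _ hl
                omega
              have upg : ∀ G, (Δ.isCone G ∧ γ ⊆ G ∧ ∃ l' ∈ L, e' l' ≠ 0 ∧ l' ∈ G) →
                  (Δ.isCone G ∧ γ ⊆ G ∧ ∃ l' ∈ L, e l' ≠ 0 ∧ l' ∈ G) := by
                rintro G ⟨hG1, hG2, l', hl', hne, hG3⟩
                refine ⟨hG1, hG2, l', hl', ?_, hG3⟩
                by_cases hll : l' = l
                · subst hll; rw [he]; omega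
                · rwa [hupd, Function.update_of_ne hll] at hne
              have M1 := SpanP_mono S Δ uu ru hc upg (ihN L e' κ hmeas' hdisj)
              have M2 := SpanP_mono S Δ uu ru hc upg
                (ihN L e' (κ + Finsupp.single l 1) hmeas' hdisj)
              have M3 : Phi S Δ uu ru hc (mm (κ + Finsupp.single l 1) * xCP γ) ∈
                  SpanP S Δ uu ru hc
                    (fun G => Δ.isCone G ∧ γ ⊆ G ∧ ∃ l' ∈ L, e l' ≠ 0 ∧ l' ∈ G) := by
                have hins : (mm (κ + Finsupp.single l 1) * xCP γ : CP d) =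
                    mm κ * xCP (insert l γ) := by
                  rw [xCP_insert hlγ, ← mul_assoc, mm_mul]
                by_cases hcone : Δ.isCone (insert l γ)
                · have hcard := cone_card_le Δ hcone
                  have hcard' : (insert l γ).card = γ.card + 1 :=
                    Finset.card_insert_of_notMem hlγ
                  have hklt : n - (insert l γ).card < k := by omega
                  rw [hins]
                  refine SpanP_mono S Δ uu ru hc ?_
                    ((H _ hklt).1 (insert l γ) hcone (le_refl _) (degk κ) κ (le_refl _))
                  rintro G ⟨hG1, hG2⟩
                  exact ⟨hG1, (Finset.subset_insert l γ).trans hG2, l, hl,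
                    by rw [he]; omega, hG2 (Finset.mem_insert_self l γ)⟩
                · rw [hins, Phi_xCP_zero S Δ uu ru hc _ hcone]
                  exact AddSubmonoid.zero_mem _
              exact SpanP_sub S Δ uu ru hc (SpanP_sub S Δ uu ru hc M1 M2) M3
  have hA : ∀ γ : Finset (Fin d), Δ.isCone γ → n - γ.card ≤ k →
      ∀ (D : ℕ) (κ : Fin d →₀ ℕ), degk κ ≤ D →
      Phi S Δ uu ru hc (mm κ * xCP γ) ∈
        SpanP S Δ uu ru hc (fun G => Δ.isCone G ∧ γ ⊆ G) := by
    intro γ hγ hk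
    have hbase : Phi S Δ uu ru hc (mm (0 : Fin d →₀ ℕ) * xCP γ) ∈
        SpanP S Δ uu ru hc (fun G => Δ.isCone G ∧ γ ⊆ G) := by
      rw [mm_zero, one_mul, Phi_xCP]
      have := SpanP_gen S Δ uu ru hc
        (Pred := fun G => Δ.isCone G ∧ γ ⊆ G) ⟨hγ, Finset.Subset.refl γ⟩ (1 : S)
      rwa [Cc_one', map_one, one_mul] at this
    intro D
    induction D with
    | zero =>
        intro κ hD
        have hκ0 : κ = 0 := degk_eq_zero (by omega)
        subst hκ0
        exact hbase
    | succ D ihD =>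
        intro κ hD
        by_cases hout : ∀ j ∈ κ.support, j ∈ γ
        · rcases eq_or_ne κ 0 with rfl | hκ0
          · exact hbase
          · obtain ⟨j, hjs⟩ := Finsupp.support_nonempty_iff.mpr hκ0
            have hjγ : j ∈ γ := hout j hjs
            have hκ : κ - Finsupp.single j 1 + Finsupp.single j 1 = κ := sub_single_add hjs
            obtain ⟨a, L, ep, en, hLdisj, heq⟩ :=
              oneStep S Δ uu ru hc hnd hfirst huu hγ (Finset.Subset.refl γ) hjγ
                (κ - Finsupp.single j 1)
            rw [← hκ, heq]
            have hdeg : degk (κ - Finsupp.single j 1) ≤ D := by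
              have h5 := degk_add_single (κ - Finsupp.single j 1) j
              rw [hκ] at h5; omega
            have upg : ∀ (e : Fin d → ℕ) G,
                (Δ.isCone G ∧ γ ⊆ G ∧ ∃ l ∈ L, e l ≠ 0 ∧ l ∈ G) →
                (Δ.isCone G ∧ γ ⊆ G) := fun e G h => ⟨h.1, h.2.1⟩
            refine add_mem (SpanP_cmul S Δ uu ru hc _ (ihD _ hdeg)) ?_
            have c1 := SpanP_mono S Δ uu ru hc (upg ep)
              (hC γ hγ hk (L.sum ep + L.card) L ep (κ - Finsupp.single j 1)
                (le_refl _) hLdisj)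
            have c2 := SpanP_mono S Δ uu ru hc (upg ep)
              (hC γ hγ hk (L.sum ep + L.card) L ep
                (κ - Finsupp.single j 1 + Finsupp.single j 1) (le_refl _) hLdisj)
            have c3 := SpanP_mono S Δ uu ru hc (upg en)
              (hC γ hγ hk (L.sum en + L.card) L en (κ - Finsupp.single j 1)
                (le_refl _) hLdisj)
            exact SpanP_sub S Δ uu ru hc (SpanP_sub S Δ uu ru hc c1 c2)
              (SpanP_cmul S Δ uu ru hc _ c3)
        · push_neg at hout
          obtain ⟨j, hjs, hjγ⟩ := hout
          have hκ : κ - Finsupp.single j 1 + Finsupp.single j 1 = κ := sub_single_add hjs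
          have hsplit : (mm κ * xCP γ : CP d) =
              mm (κ - Finsupp.single j 1) * xCP (insert j γ) := by
            rw [xCP_insert hjγ, ← mul_assoc, mm_mul, hκ]
          by_cases hcone : Δ.isCone (insert j γ)
          · have hcard := cone_card_le Δ hcone
            have hcard' : (insert j γ).card = γ.card + 1 :=
              Finset.card_insert_of_notMem hjγ
            have hklt : n - (insert j γ).card < k := by omega
            rw [hsplit]
            refine SpanP_mono S Δ uu ru hc ?_
              ((H _ hklt).1 (insert j γ) hcone (le_refl _) (degk (κ - Finsupp.single j 1))
                (κ - Finsupp.single j 1) (le_refl _))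
            rintro G ⟨hG1, hG2⟩
            exact ⟨hG1, (Finset.subset_insert j γ).trans hG2⟩
          · rw [hsplit, Phi_xCP_zero S Δ uu ru hc _ hcone]
            exact AddSubmonoid.zero_mem _
  exact ⟨hA, hC⟩

end Aux3

theorem statement5 {n d m : ℕ} (hn : 1 ≤ n) (hnd : n ≤ d) (hm : 1 ≤ m)
    (Δ : Fan n d) (o : MaxOrder Δ m) (hstar : o.Star)
    (hlast : o.σ ⟨m - 1, by omega⟩ = firstn hnd)
    (S : Type*) [Ring S] (ru : Fin n → Sˣ)
    (hcen : ∀ i, (ru i : S) ∈ Subring.center S)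
    (uu : Fin n → ((Fin n → ℤ) →ₗ[ℤ] ℤ))
    (huu : ∀ i j : Fin n, uu i (Δ.v (Fin.castLE hnd j)) = if i = j then 1 else 0)
    (α γ β : Finset (Fin d))
    (hα : Δ.isCone α) (hγ : Δ.isCone γ) (hβ : Δ.isCone β)
    (hαγ : α ⊂ γ) (hγβ : γ ⊆ β)
    (j1 : Fin d) (hj1 : j1 ∈ γ) (hj1α : j1 ∉ α) :
    ∃ (a : Fin n → ℤ) (s : ℕ) (G : Fin s → Finset (Fin d)) (cp : Fin s → S),
      (∀ p, Δ.isCone (G p) ∧ α ⊂ G p ∧ ¬ G p ⊆ β ∧ γ.card < (G p).card) ∧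
      mkRcal S Δ uu ru (central_commute S ru hcen) (X S j1 * mon S γ) =
        mkRcal S Δ uu ru (central_commute S ru hcen)
            (Cc S (1 - rOf S ru (central_commute S ru hcen) a)) *
          mkRcal S Δ uu ru (central_commute S ru hcen) (mon S γ)
        + ∑ p, mkRcal S Δ uu ru (central_commute S ru hcen) (Cc S (cp p)) *
            mkRcal S Δ uu ru (central_commute S ru hcen) (mon S (G p)) := by
  classical
  have hfirst : Δ.isCone (firstn hnd) := by rw [← hlast]; exact o.isCone_σ _
  set hc := central_commute S ru hcen with hhc
  obtain ⟨a, L, ep, en, hLβ, heq⟩ :=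
    oneStep S Δ uu ru hc hnd hfirst huu hβ hγβ hj1 (0 : Fin d →₀ ℕ)
  have hC := (core S Δ uu ru hc hnd hfirst huu n).2
  have hLγ : Disjoint L γ := hLβ.mono_right hγβ
  have upg : ∀ (e : Fin d → ℕ) (G : Finset (Fin d)),
      (Δ.isCone G ∧ γ ⊆ G ∧ ∃ l ∈ L, e l ≠ 0 ∧ l ∈ G) →
      (Δ.isCone G ∧ γ ⊆ G ∧ ∃ l, l ∉ β ∧ l ∈ G) := by
    rintro e G ⟨h1, h2, l, hlL, -, h3⟩
    exact ⟨h1, h2, l, Finset.disjoint_left.mp hLβ hlL, h3⟩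
  have c1 := SpanP_mono S Δ uu ru hc (upg ep)
    (hC γ hγ (Nat.sub_le n _) (L.sum ep + L.card) L ep 0 (le_refl _) hLγ)
  have c2 := SpanP_mono S Δ uu ru hc (upg ep)
    (hC γ hγ (Nat.sub_le n _) (L.sum ep + L.card) L ep
      ((0 : Fin d →₀ ℕ) + Finsupp.single j1 1) (le_refl _) hLγ)
  have c3 := SpanP_mono S Δ uu ru hc (upg en)
    (hC γ hγ (Nat.sub_le n _) (L.sum en + L.card) L en 0 (le_refl _) hLγ)
  have hE := SpanP_sub S Δ uu ru hc (SpanP_sub S Δ uu ru hc c1 c2)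
    (SpanP_cmul S Δ uu ru hc (rOf S ru hc a) c3)
  obtain ⟨s, G, cp, hG, hsum⟩ := SpanP_extract S Δ uu ru hc hE
  refine ⟨a, s, G, cp, ?_, ?_⟩
  · intro p
    obtain ⟨hG1, hG2, l, hlβ, hlG⟩ := hG p
    have hssub : γ ⊂ G p := Finset.ssubset_iff_of_subset hG2 |>.mpr ⟨l, hlG,
      fun hlγ => hlβ (hγβ hlγ)⟩
    refine ⟨hG1, ?_, fun hsub => hlβ (hsub hlG), Finset.card_lt_card hssub⟩
    exact Finset.ssubset_of_ssubset_of_subset hαγ hG2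
  · have hXmon : mkRcal S Δ uu ru hc (X S j1 * mon S γ) =
        Phi S Δ uu ru hc (mm ((0 : Fin d →₀ ℕ) + Finsupp.single j1 1) * xCP γ) := by
      have h9 : psi S d (mm (Finsupp.single j1 1) * xCP γ) = X S j1 * mon S γ := by
        rw [map_mul, psi_X, psi_xCP]
      rw [zero_add]
      exact (congrArg (mkRcal S Δ uu ru hc) h9).symm
    have hmon : Phi S Δ uu ru hc (mm (0 : Fin d →₀ ℕ) * xCP γ) =
        mkRcal S Δ uu ru hc (mon S γ) := by
      rw [mm_zero, one_mul, Phi_xCP]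
    rw [hXmon, heq, hmon, hsum]

end SU
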